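/- arXiv:2304.13430 — 2 statements merged into one kernel-verified Lean document; each statement's English description precedes it below -/
import Mathlib

section
/- Let P be a definite logic program whose rules define every predicate symbol occurring in P, let D be its set of rules viewed as a definition of all its predicates, let CF be a set of constant and function symbols containing all constants and functors of P and at least one constant, and let Σ be the set of all symbols of P together with CF. Then a structure M interpreting Σ satisfies D as a definition and satisfies the Herbrand Axiom Herb(CF) if and only if M is isomorphic relative to Σ to the least Herbrand model LHM_CF(P). -/
/-- Terms over function symbols `Func` (with arities `arF`) and variables `V`.
Constants are the function symbols of arity `0`. -/
inductive Term (Func : Type) (arF : Func → ℕ) (V : Type) : Type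
  | var : V → Term Func arF V
  | func : (f : Func) → (Fin (arF f) → Term Func arF V) → Term Func arF V

/-- Ground terms: terms without variables.  `GTerm Func arF` is the Herbrand
universe `HU(CF)` for the set `CF` of constant and function symbols. -/
abbrev GTerm (Func : Type) (arF : Func → ℕ) : Type := Term Func arF Empty

/-- A first-order structure for the vocabulary with function symbols `Func`
(arities `arF`) and predicate symbols `Pred` (arities `arP`): a nonempty universe
together with interpretations of all function and predicate symbols. -/
structure Struc (Func : Type) (arF : Func → ℕ) (Pred : Type) (arP : Pred → ℕ) : Type 1 where
  carrier : Type
  nonempty : Nonempty carrier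
  interpF : (f : Func) → (Fin (arF f) → carrier) → carrier
  interpP : (p : Pred) → (Fin (arP p) → carrier) → Prop

variable {Func : Type} {arF : Func → ℕ} {Pred : Type} {arP : Pred → ℕ}

/-- Evaluation of a term in a structure under a variable assignment. -/
def Term.eval (M : Struc Func arF Pred arP) {V : Type} (σ : V → M.carrier) :
    Term Func arF V → M.carrier
  | .var v => σ v
  | .func f args => M.interpF f fun i => (args i).eval M σ

/-- An atomic formula `p(t₁, …, tₖ)` with variables from `V`. -/
structure Atom (Func : Type) (arF : Func → ℕ) (Pred : Type) (arP : Pred → ℕ)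
    (V : Type) : Type where
  pred : Pred
  args : Fin (arP pred) → Term Func arF V

/-- A rule `A ← B₁, …, Bₙ` of a definite logic program (variables are natural numbers). -/
structure Rule (Func : Type) (arF : Func → ℕ) (Pred : Type) (arP : Pred → ℕ) : Type where
  head : Atom Func arF Pred arP ℕ
  body : List (Atom Func arF Pred arP ℕ)

/-- Truth of an atom in a structure under an assignment. -/
def Atom.holds (M : Struc Func arF Pred arP) {V : Type} (σ : V → M.carrier)
    (a : Atom Func arF Pred arP V) : Prop :=
  M.interpP a.pred fun i => (a.args i).eval M σ

/-- A structure satisfies a rule as a first-order implication: the universal closure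
of `B₁ ∧ ⋯ ∧ Bₙ → A`. -/
def Rule.holds (M : Struc Func arF Pred arP) (r : Rule Func arF Pred arP) : Prop :=
  ∀ σ : ℕ → M.carrier, (∀ b ∈ r.body, b.holds M σ) → r.head.holds M σ

/-- `M` satisfies all rules of `D` as first-order implications (the Horn theory of `D`). -/
def SatRules (M : Struc Func arF Pred arP) (D : Set (Rule Func arF Pred arP)) : Prop :=
  ∀ r ∈ D, r.holds M

/-- `M` satisfies the rule set `D` as a definition of all predicate symbols:
`M` satisfies every rule as an implication, and for every structure `N` with the same
universe and the same interpretation of all parameter symbols (here: all function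
symbols) that satisfies every rule as an implication, `p^M ⊆ p^N` for every defined
predicate `p` (here: every predicate). -/
def SatDef (D : Set (Rule Func arF Pred arP)) (M : Struc Func arF Pred arP) : Prop :=
  SatRules M D ∧
    ∀ IP : (p : Pred) → (Fin (arP p) → M.carrier) → Prop,
      SatRules ⟨M.carrier, M.nonempty, M.interpF, IP⟩ D →
        ∀ p args, M.interpP p args → IP p args

/-- If `CF` contains at least one constant then the Herbrand universe is nonempty. -/
theorem nonempty_gterm (hc : ∃ f : Func, arF f = 0) : Nonempty (GTerm Func arF) := by
  obtain ⟨f, hf⟩ := hc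
  exact ⟨.func f fun i => (Fin.cast hf i).elim0⟩

/-- The Herbrand structure with universe `HU(CF)`, Herbrand values for all constant and
function symbols, and predicate interpretations `IP`. -/
def HStruc (h : Nonempty (GTerm Func arF))
    (IP : (p : Pred) → (Fin (arP p) → GTerm Func arF) → Prop) :
    Struc Func arF Pred arP :=
  ⟨GTerm Func arF, h, fun f args => .func f args, IP⟩

/-- The least Herbrand model of the program `D`: the Herbrand structure interpreting
each predicate by the intersection of its interpretations over all Herbrand models. -/
def LHM (D : Set (Rule Func arF Pred arP)) (h : Nonempty (GTerm Func arF)) :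
    Struc Func arF Pred arP :=
  HStruc h fun p args =>
    ∀ IP : (p : Pred) → (Fin (arP p) → GTerm Func arF) → Prop,
      SatRules (HStruc h IP) D → IP p args

/-- `M` satisfies the Herbrand Axiom `Herb(CF)`: `M` is isomorphic, relative to the
function symbols `CF`, to a structure with universe `HU(CF)` and Herbrand values for
all symbols of `CF`. -/
def SatHerb (M : Struc Func arF Pred arP) : Prop :=
  ∃ e : GTerm Func arF ≃ M.carrier,
    ∀ (f : Func) (args : Fin (arF f) → GTerm Func arF),
      e (.func f args) = M.interpF f fun i => e (args i)

/-- `M` and `N` are isomorphic relative to the full vocabulary `Σ`: a bijection of the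
universes commuting with the interpretations of all function and predicate symbols. -/
def Iso (M N : Struc Func arF Pred arP) : Prop :=
  ∃ e : M.carrier ≃ N.carrier,
    (∀ (f : Func) (args : Fin (arF f) → M.carrier),
        e (M.interpF f args) = N.interpF f fun i => e (args i)) ∧
    (∀ (p : Pred) (args : Fin (arP p) → M.carrier),
        M.interpP p args ↔ N.interpP p fun i => e (args i))

/-- A ground atom: an atomic formula without variables. -/
abbrev GAtom (Func : Type) (arF : Func → ℕ) (Pred : Type) (arP : Pred → ℕ) : Type :=
  Atom Func arF Pred arP Empty

/-- Truth of a ground atom in a structure. -/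
def GAtom.holds (M : Struc Func arF Pred arP) (a : GAtom Func arF Pred arP) : Prop :=
  M.interpP a.pred fun i => (a.args i).eval M fun v => v.elim

/-!
A definition is preserved by isomorphisms, and on a fixed universe with fixed function
interpretations it determines the predicates uniquely. A model of `Herb(CF)` is isomorphic
to a Herbrand structure, which then also satisfies `D` as a definition; so does the least
Herbrand model, and the two Herbrand structures therefore coincide. Conversely, anything
isomorphic to the least Herbrand model inherits both properties from it.
-/

def Struc.withPreds (M : Struc Func arF Pred arP)
    (IP : (p : Pred) → (Fin (arP p) → M.carrier) → Prop) : Struc Func arF Pred arP :=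
  ⟨M.carrier, M.nonempty, M.interpF, IP⟩

theorem Term.eval_equiv {M N : Struc Func arF Pred arP} (e : M.carrier ≃ N.carrier)
    (hf : ∀ f args, e (M.interpF f args) = N.interpF f (e ∘ args))
    {V : Type} (σ : V → M.carrier) (t : Term Func arF V) :
    e (t.eval M σ) = t.eval N (e ∘ σ) := by
  induction t with
  | var v => rfl
  | func f args ih => simp only [Term.eval, hf]; exact congrArg _ (funext ih)

namespace Iso

variable {M N : Struc Func arF Pred arP}

theorem symm (hMN : Iso M N) : Iso N M := by
  obtain ⟨e, hf, hp⟩ := hMN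
  refine ⟨e.symm, fun f args => e.injective ?_, fun p args => ?_⟩
  · simp [hf]
  · rw [hp]
    simp

theorem atom_holds_iff {e : M.carrier ≃ N.carrier}
    (hf : ∀ f args, e (M.interpF f args) = N.interpF f (e ∘ args))
    (hp : ∀ p args, M.interpP p args ↔ N.interpP p (e ∘ args))
    {V : Type} (σ : V → M.carrier) (a : Atom Func arF Pred arP V) :
    a.holds M σ ↔ a.holds N (e ∘ σ) := by
  simp only [Atom.holds, hp, ← Term.eval_equiv e hf]
  rfl

theorem satRules {D : Set (Rule Func arF Pred arP)} (hMN : Iso M N) (hM : SatRules M D) :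
    SatRules N D := by
  obtain ⟨e, hf, hp⟩ := hMN
  intro r hr
  rw [Rule.holds, e.surjective.comp_left.forall]
  simp only [← atom_holds_iff hf hp]
  exact hM r hr

theorem withPreds_comp {e : M.carrier ≃ N.carrier}
    (hf : ∀ f args, e (M.interpF f args) = N.interpF f (e ∘ args))
    (IP : (p : Pred) → (Fin (arP p) → N.carrier) → Prop) :
    Iso (M.withPreds fun p args => IP p (e ∘ args)) (N.withPreds IP) :=
  ⟨e, hf, fun _ _ => Iff.rfl⟩

theorem satDef {D : Set (Rule Func arF Pred arP)} (hMN : Iso M N) (hM : SatDef D M) :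
    SatDef D N := by
  obtain ⟨e, hf, hp⟩ := id hMN
  refine ⟨hMN.satRules hM.1, fun IP hIP p args hN => ?_⟩
  have hpull : SatRules (M.withPreds fun q a => IP q (e ∘ a)) D :=
    (withPreds_comp hf IP).symm.satRules hIP
  have hargs : e ∘ (e.symm ∘ args) = args := congrArg (· ∘ args) e.self_comp_symm
  have hM' : M.interpP p (e.symm ∘ args) := (hp p _).mpr (by simpa using hN)
  rw [← hargs]
  exact hM.2 _ hpull p _ hM'

theorem satDef_iff {D : Set (Rule Func arF Pred arP)} (hMN : Iso M N) :
    SatDef D M ↔ SatDef D N :=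
  ⟨hMN.satDef, hMN.symm.satDef⟩

theorem satHerb (hMN : Iso M N) (hM : SatHerb M) : SatHerb N := by
  obtain ⟨e₀, he₀⟩ := hM
  obtain ⟨e, hf, -⟩ := hMN
  exact ⟨e₀.trans e, fun f args => by simp [he₀, hf]⟩

end Iso

theorem SatDef.interpP_eq {D : Set (Rule Func arF Pred arP)} {M : Struc Func arF Pred arP}
    {IP : (p : Pred) → (Fin (arP p) → M.carrier) → Prop}
    (hM : SatDef D M) (hIP : SatDef D (M.withPreds IP)) : M.interpP = IP :=
  funext₂ fun p args => propext ⟨hM.2 IP hIP.1 p args, hIP.2 M.interpP hM.1 p args⟩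

theorem satHerb_hStruc (h : Nonempty (GTerm Func arF))
    (IP : (p : Pred) → (Fin (arP p) → GTerm Func arF) → Prop) :
    SatHerb (HStruc h IP) :=
  ⟨Equiv.refl _, fun _ _ => rfl⟩

theorem satRules_LHM (D : Set (Rule Func arF Pred arP)) (h : Nonempty (GTerm Func arF)) :
    SatRules (LHM D h) D := by
  intro r hr σ hbody IP hIP
  have eval_eq : ∀ t : Term Func arF ℕ, t.eval (LHM D h) σ = t.eval (HStruc h IP) σ := by
    intro t
    induction t with
    | var v => rfl
    | func f args ih => exact congrArg (Term.func f) (funext ih)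
  have hb : ∀ b ∈ r.body, b.holds (HStruc h IP) σ := fun b hb => by
    have hbIP := hbody b hb IP hIP
    simp only [eval_eq] at hbIP
    exact hbIP
  simp only [eval_eq]
  exact hIP r hr σ hb

theorem satDef_LHM (D : Set (Rule Func arF Pred arP)) (h : Nonempty (GTerm Func arF)) :
    SatDef D (LHM D h) :=
  ⟨satRules_LHM D h, fun IP hIP _ _ hL => hL IP hIP⟩

theorem statement_2_general (D : Set (Rule Func arF Pred arP))
    (hc : ∃ f : Func, arF f = 0)
    (M : Struc Func arF Pred arP) :
    (SatDef D M ∧ SatHerb M) ↔ Iso M (LHM D (nonempty_gterm hc)) := by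
  set h := nonempty_gterm hc
  constructor
  · rintro ⟨hM, e, he⟩
    let H : Struc Func arF Pred arP := HStruc h fun p args => M.interpP p (e ∘ args)
    have hHM : Iso H M := ⟨e, he, fun _ _ => Iff.rfl⟩
    have hL : (LHM D h).interpP = H.interpP :=
      (satDef_LHM D h).interpP_eq (hHM.satDef_iff.mpr hM)
    have hLH : LHM D h = H := congrArg (HStruc h) hL
    rw [hLH]
    exact hHM.symm
  · intro hML
    exact ⟨hML.satDef_iff.mpr (satDef_LHM D h), hML.symm.satHerb (satHerb_hStruc h _)⟩

/-- For a definite logic program `P` whose rules `D` define every predicate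
symbol, with `CF` containing all constants and functors of `P` and at least one constant,
a structure `M` (over `Σ` = all symbols of `P` and `CF`) satisfies `D` as a definition and
satisfies `Herb(CF)` iff `M` is isomorphic relative to `Σ` to the least Herbrand model. -/
theorem statement_2 (D : Set (Rule Func arF Pred arP))
    (hdef : ∀ p : Pred, ∃ r ∈ D, r.head.pred = p)
    (hc : ∃ f : Func, arF f = 0)
    (M : Struc Func arF Pred arP) :
    (SatDef D M ∧ SatHerb M) ↔ Iso M (LHM D (nonempty_gterm hc)) :=
  statement_2_general D hc M
end

section
/- Let P be a definite logic program and CF a set of constant and function symbols containing all constants and functors of P and at least one constant. For every ground atom A over the vocabulary of P and CF, the Horn theory of P (the rules read as first-order implications) logically entails A (A is true in every first-order model of the Horn theory) if and only if A is true in the least Herbrand model LHM_CF(P). -/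
variable {Func : Type} {arF : Func → ℕ} {Pred : Type} {arP : Pred → ℕ}

/-- Term evaluation in a Herbrand structure does not depend on the predicate part. -/
theorem eval_herb_indep (h : Nonempty (GTerm Func arF))
    (IP IP' : (p : Pred) → (Fin (arP p) → GTerm Func arF) → Prop) {V : Type}
    (σ : V → GTerm Func arF) (t : Term Func arF V) :
    t.eval (HStruc h IP) σ = t.eval (HStruc h IP') σ := by
  induction t with
  | var v => rfl
  | func f args ih => simp only [Term.eval]; exact congrArg _ (funext fun i => ih i)

/-- Evaluating a ground term in a Herbrand structure is the identity. -/
theorem eval_herb_ground (h : Nonempty (GTerm Func arF))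
    (IP : (p : Pred) → (Fin (arP p) → GTerm Func arF) → Prop)
    (t : GTerm Func arF) :
    t.eval (HStruc h IP) (fun v => v.elim) = t := by
  induction t with
  | var v => exact v.elim
  | func f args ih => simp only [Term.eval]; exact congrArg _ (funext fun i => ih i)

/-- Substitution lemma: evaluating the Herbrand value of a term in `M`. -/
theorem eval_herb_comp (M : Struc Func arF Pred arP) (h : Nonempty (GTerm Func arF))
    (IP : (p : Pred) → (Fin (arP p) → GTerm Func arF) → Prop) {V : Type}
    (σ : V → GTerm Func arF) (t : Term Func arF V) :
    (t.eval (HStruc h IP) σ).eval M (fun v => v.elim) =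
      t.eval M (fun v => (σ v).eval M (fun w => w.elim)) := by
  induction t with
  | var v => rfl
  | func f args ih => simp only [Term.eval]; exact congrArg _ (funext fun i => ih i)

/-- For every ground atom `A` over the vocabulary of `P` and `CF`, the Horn
theory of `P` logically entails `A` (i.e. `A` is true in every first-order model of the
rules read as implications) iff `A` is true in the least Herbrand model `LHM_CF(P)`. -/
theorem statement_5 (D : Set (Rule Func arF Pred arP)) (hc : ∃ f : Func, arF f = 0)
    (A : GAtom Func arF Pred arP) :
    (∀ M : Struc Func arF Pred arP, SatRules M D → A.holds M) ↔
      A.holds (LHM D (nonempty_gterm hc)) := by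
  set h := nonempty_gterm hc with hh
  constructor
  · intro hall
    apply hall
    -- LHM satisfies the rules
    intro r hr σ hbody
    intro IP hIP
    have := hIP r hr σ
    have heval : ∀ (b : Atom Func arF Pred arP ℕ),
        (fun i => (b.args i).eval (LHM D h) σ) =
          (fun i => (b.args i).eval (HStruc h IP) σ) := by
      intro b
      funext i
      exact eval_herb_indep h _ IP σ (b.args i)
    have hbody' : ∀ b ∈ r.body, b.holds (HStruc h IP) σ := by
      intro b hb
      have := hbody b hb IP hIP
      unfold Atom.holds at this ⊢
      rwa [← heval b]
    have hhead := hIP r hr σ hbody'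
    unfold Atom.holds at hhead
    rw [heval r.head]
    exact hhead
  · intro hA M hM
    -- Herbrand interpretation induced by M
    set IP : (p : Pred) → (Fin (arP p) → GTerm Func arF) → Prop :=
      fun p gargs => M.interpP p (fun i => (gargs i).eval M (fun v => v.elim)) with hIPdef
    have hSat : SatRules (HStruc h IP) D := by
      intro r hr σ hbody
      unfold Atom.holds
      show M.interpP r.head.pred _
      have key : ∀ (b : Atom Func arF Pred arP ℕ),
          (fun i => ((b.args i).eval (HStruc h IP) σ).eval M (fun v => v.elim)) =
            (fun i => (b.args i).eval M (fun v => (σ v).eval M (fun w => w.elim))) := by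
        intro b; funext i; exact eval_herb_comp M h IP σ (b.args i)
      have := hM r hr (fun v => (σ v).eval M (fun w => w.elim)) ?_
      · unfold Atom.holds at this
        simpa only [key r.head] using (key r.head ▸ this)
      · intro b hb
        have hb' := hbody b hb
        unfold Atom.holds at hb' ⊢
        have : M.interpP b.pred
            (fun i => ((b.args i).eval (HStruc h IP) σ).eval M (fun v => v.elim)) := hb'
        rwa [key b] at this
    have := hA IP hSat
    unfold GAtom.holds
    have hargs : (fun i => (A.args i).eval M (fun v => v.elim)) =
        fun i => ((A.args i).eval (LHM D h) (fun v => v.elim)).eval M (fun v => v.elim) := by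
      funext i
      have hg : (A.args i).eval (LHM D h) (fun v => v.elim) = A.args i := by
        have := eval_herb_ground h (fun p args =>
          ∀ IP : (p : Pred) → (Fin (arP p) → GTerm Func arF) → Prop,
            SatRules (HStruc h IP) D → IP p args) (A.args i)
        exact this
      rw [hg]
    rw [hargs]
    exact this
end
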